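/- arXiv:1709.05787 — 3 statements merged into one kernel-verified Lean document; each statement's English description precedes it below -/
import Mathlib

section
/- Let 0 < β < 1, θ ≥ 0, σ > 0, γ > 0, π ≥ 0, δ > 0, ρ > 0, c₀ > 0, z₀ > 0, and set δ* := δ(1−β+θ)/(1−β), z̄ := ((δ*+π)/(βγ))^{1/(1−β)}, z(t) := z̄z₀/[(z̄^{1−β}−z₀^{1−β})e^{−((1−β)(δ*+π)/β)t}+z₀^{1−β}]^{1/(1−β)}, and c(t) := c₀z₀^{β/σ}e^{−((ρ−δ*)/σ)t}z(t)^{−β/σ}. Then for all t ≥ 0, c'(t)/c(t) = [(δ−ρ)(1−β)+δθ]/(σ(1−β)) − (β/σ)·z'(t)/z(t), and c'(t)/c(t) tends to [(δ−ρ)(1−β)+δθ]/(σ(1−β)) as t → ∞. -/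
/-!
Both parts come from logarithmic derivatives. Since `c = K e^{-(ρ-δ*)t} z^{-β/σ}`, its logarithmic
derivative is `(δ*-ρ)/σ - (β/σ) z'/z`, and `(δ*-ρ)/σ` is the balanced-growth rate. Writing
`z = C / D^{1/(1-β)}` with `D(t) = A e^{rt} + B`, `r < 0`, we get `z'/z = -(1/(1-β)) D'/D`, which
tends to `0` because `D' → 0` and `D → B = z₀^{1-β} > 0`. Positivity of `D` for `t ≥ 0` holds
because `D(t)` is a convex combination of `A + B = z̄^{1-β} > 0` and `B > 0`.
-/

open Filter Topology Real

theorem logDeriv_rpow_const {f : ℝ → ℝ} {x : ℝ} (q : ℝ) (hf : DifferentiableAt ℝ f x)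
    (hfx : 0 < f x) : logDeriv (fun s => f s ^ q) x = q * logDeriv f x := by
  rw [logDeriv_apply, logDeriv_apply, (hf.hasDerivAt.rpow_const (.inl hfx.ne')).deriv,
    rpow_sub_one hfx.ne']
  field_simp

theorem logDeriv_exp_const_mul (r x : ℝ) : logDeriv (fun s => exp (r * s)) x = r := by
  rw [logDeriv_apply, (((hasDerivAt_id' x).const_mul r).exp).deriv]
  field_simp [(exp_pos _).ne']

theorem logDeriv_const_mul_exp_mul_rpow {g : ℝ → ℝ} {x K : ℝ} (r q : ℝ) (hK : K ≠ 0)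
    (hg : DifferentiableAt ℝ g x) (hgx : 0 < g x) :
    logDeriv (fun s => K * exp (r * s) * g s ^ q) x = r + q * logDeriv g x := by
  rw [logDeriv_mul x (by positivity) (rpow_pos_of_pos hgx q).ne' (by fun_prop)
    (hg.rpow_const (.inl hgx.ne')), logDeriv_const_mul x K hK, logDeriv_exp_const_mul,
    logDeriv_rpow_const q hg hgx]

theorem differentiableAt_const_div_rpow {f : ℝ → ℝ} {x : ℝ} (C e : ℝ)
    (hf : DifferentiableAt ℝ f x) (hfx : 0 < f x) :
    DifferentiableAt ℝ (fun s => C / f s ^ e) x :=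
  (differentiableAt_const C).div (hf.rpow_const (.inl hfx.ne')) (rpow_pos_of_pos hfx e).ne'

theorem logDeriv_const_div_rpow {f : ℝ → ℝ} {x C : ℝ} (e : ℝ) (hC : C ≠ 0)
    (hf : DifferentiableAt ℝ f x) (hfx : 0 < f x) :
    logDeriv (fun s => C / f s ^ e) x = -(e * logDeriv f x) := by
  rw [logDeriv_div x hC (rpow_pos_of_pos hfx e).ne' (differentiableAt_const C)
    (hf.rpow_const (.inl hfx.ne')), logDeriv_const, logDeriv_rpow_const e hf hfx]
  simp

theorem mul_exp_add_pos {A B r s : ℝ} (hB : 0 < B) (hAB : 0 < A + B) (hr : r ≤ 0)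
    (hs : 0 ≤ s) : 0 < A * exp (r * s) + B := by
  have he : exp (r * s) ≤ 1 := exp_le_one_iff.mpr (mul_nonpos_of_nonpos_of_nonneg hr hs)
  have hconvex : 0 < (A + B) * exp (r * s) + B * (1 - exp (r * s)) := by
    have : 0 ≤ 1 - exp (r * s) := by linarith
    positivity
  linarith

theorem tendsto_logDeriv_mul_exp_add_const (A : ℝ) {B r : ℝ} (hr : r < 0) (hB : B ≠ 0) :
    Tendsto (logDeriv fun s => A * exp (r * s) + B) atTop (𝓝 0) := by
  have hexp : Tendsto (fun s => exp (r * s)) atTop (𝓝 0) :=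
    tendsto_exp_atBot.comp (tendsto_id.const_mul_atTop_of_neg hr)
  have hderiv : ∀ s, deriv (fun s => A * exp (r * s) + B) s = A * r * exp (r * s) := by
    intro s
    rw [((((hasDerivAt_id' s).const_mul r).exp.const_mul A).add_const B).deriv]
    ring
  have hlim := (hexp.const_mul (A * r)).div ((hexp.const_mul A).add_const B) (by simpa using hB)
  rw [mul_zero, zero_div] at hlim
  convert hlim using 1
  ext s
  rw [logDeriv_apply, hderiv, Pi.div_apply]

theorem tendsto_logDeriv_const_div_rpow_mul_exp_add_const {A B C r : ℝ} (e : ℝ) (hC : C ≠ 0)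
    (hB : 0 < B) (hAB : 0 < A + B) (hr : r < 0) :
    Tendsto (logDeriv fun s => C / (A * exp (r * s) + B) ^ e) atTop (𝓝 0) := by
  have hlim := ((tendsto_logDeriv_mul_exp_add_const A hr hB.ne').const_mul e).neg
  rw [mul_zero, neg_zero] at hlim
  refine hlim.congr' ?_
  filter_upwards [eventually_ge_atTop 0] with t ht
  exact (logDeriv_const_div_rpow (f := fun s => A * exp (r * s) + B) e hC (by fun_prop)
    (mul_exp_add_pos hB hAB hr.le ht)).symm

theorem c_growth_rate_general (β θ σ γ pi δ ρ c0 z0 : ℝ)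
    (hβ0 : 0 < β) (hβ1 : β < 1) (hθ : 0 ≤ θ) (hγ : 0 < γ)
    (hpi : 0 ≤ pi) (hδ : 0 < δ) (hc0 : 0 < c0) (hz0 : 0 < z0)
    (δs zbar : ℝ)
    (hδs : δs = δ * (1 - β + θ) / (1 - β))
    (hzbar : zbar = ((δs + pi) / (β * γ)) ^ (1 / (1 - β)))
    (z c : ℝ → ℝ)
    (hz : ∀ t, z t = zbar * z0 /
      ((zbar ^ (1 - β) - z0 ^ (1 - β)) * Real.exp (-((1 - β) * (δs + pi) / β) * t)
        + z0 ^ (1 - β)) ^ (1 / (1 - β)))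
    (hc : ∀ t, c t = c0 * z0 ^ (β / σ) * Real.exp (-((ρ - δs) / σ) * t)
      * z t ^ (-(β / σ))) :
    (∀ t ≥ (0:ℝ), deriv c t / c t
      = ((δ - ρ) * (1 - β) + δ * θ) / (σ * (1 - β)) - β / σ * (deriv z t / z t)) ∧
    Tendsto (fun t => deriv c t / c t) atTop
      (nhds (((δ - ρ) * (1 - β) + δ * θ) / (σ * (1 - β)))) := by
  have h1β : 0 < 1 - β := by linarith
  have hzbar_pos : 0 < zbar := by rw [hzbar, hδs]; positivity
  have hrate : -((ρ - δs) / σ) = ((δ - ρ) * (1 - β) + δ * θ) / (σ * (1 - β)) := by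
    rw [hδs]; field_simp; ring
  set r := -((1 - β) * (δs + pi) / β)
  have hr : r < 0 := by simp only [r, hδs, neg_lt_zero]; positivity
  have hB : 0 < z0 ^ (1 - β) := by positivity
  have hAB : 0 < zbar ^ (1 - β) - z0 ^ (1 - β) + z0 ^ (1 - β) := by simpa using rpow_pos_of_pos hzbar_pos (1 - β)
  have hz_eq : z = fun s => zbar * z0 /
      ((zbar ^ (1 - β) - z0 ^ (1 - β)) * exp (r * s) + z0 ^ (1 - β)) ^ (1 / (1 - β)) := funext hz
  have hlog_c : ∀ t ≥ (0:ℝ), deriv c t / c t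
      = ((δ - ρ) * (1 - β) + δ * θ) / (σ * (1 - β)) - β / σ * (deriv z t / z t) := by
    intro t ht
    have hD_pos := mul_exp_add_pos hB hAB hr.le ht
    have hz_pos : 0 < z t := by rw [hz t]; positivity
    have hz_diff : DifferentiableAt ℝ z t :=
      hz_eq ▸ differentiableAt_const_div_rpow _ _ (by fun_prop) hD_pos
    rw [← logDeriv_apply, ← logDeriv_apply, funext hc, ← hrate,
      logDeriv_const_mul_exp_mul_rpow _ _ (by positivity) hz_diff hz_pos]
    ring
  refine ⟨hlog_c, ?_⟩
  have hlog_z : Tendsto (logDeriv z) atTop (𝓝 0) :=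
    hz_eq ▸ tendsto_logDeriv_const_div_rpow_mul_exp_add_const _ (by positivity) hB hAB hr
  have hlim := (hlog_z.const_mul (β / σ)).const_sub
    (((δ - ρ) * (1 - β) + δ * θ) / (σ * (1 - β)))
  rw [mul_zero, sub_zero] at hlim
  refine hlim.congr' ?_
  filter_upwards [eventually_ge_atTop 0] with t ht
  rw [hlog_c t ht, logDeriv_apply]

/-- Along the second closed-form solution of the Lucas-Uzawa model with
externalities, the growth rate of consumption equals
[(δ-ρ)(1-β)+δθ]/(σ(1-β)) - (β/σ)z'/z, and converges to its
balanced-growth-path value [(δ-ρ)(1-β)+δθ]/(σ(1-β)). -/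
theorem c_growth_rate (β θ σ γ pi δ ρ c0 z0 : ℝ)
    (hβ0 : 0 < β) (hβ1 : β < 1) (hθ : 0 ≤ θ) (hσ : 0 < σ) (hγ : 0 < γ)
    (hpi : 0 ≤ pi) (hδ : 0 < δ) (hρ : 0 < ρ) (hc0 : 0 < c0) (hz0 : 0 < z0)
    (δs zbar : ℝ)
    (hδs : δs = δ * (1 - β + θ) / (1 - β))
    (hzbar : zbar = ((δs + pi) / (β * γ)) ^ (1 / (1 - β)))
    (z c : ℝ → ℝ)
    (hz : ∀ t, z t = zbar * z0 /
      ((zbar ^ (1 - β) - z0 ^ (1 - β)) * Real.exp (-((1 - β) * (δs + pi) / β) * t)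
        + z0 ^ (1 - β)) ^ (1 / (1 - β)))
    (hc : ∀ t, c t = c0 * z0 ^ (β / σ) * Real.exp (-((ρ - δs) / σ) * t)
      * z t ^ (-(β / σ))) :
    (∀ t ≥ (0:ℝ), deriv c t / c t
      = ((δ - ρ) * (1 - β) + δ * θ) / (σ * (1 - β)) - β / σ * (deriv z t / z t)) ∧
    Tendsto (fun t => deriv c t / c t) atTop
      (nhds (((δ - ρ) * (1 - β) + δ * θ) / (σ * (1 - β)))) :=
  c_growth_rate_general β θ σ γ pi δ ρ c0 z0 hβ0 hβ1 hθ hγ hpi hδ hc0 hz0 δs zbar hδs hzbar z c hz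
    hc
end

section
/- Let 0 < β < 1, θ ≥ 0, γ > 0, π ≥ 0, δ > 0, ρ > 0 satisfy δ(1−β+θ) < ρ < δ(1−β+θ)/(1−β). Set φ := (1−β+θ)/(1−β), δ* := δφ, z̄ := ((δ*+π)/(βγ))^{1/(1−β)}, ū := (ρ − δ(1−β+θ))(1−β)/(δβ(1−β+θ)), g := (δ*−ρ)/β, g_h := g/φ, and for z₀ > 0 define z(t) := z̄z₀/[(z̄^{1−β}−z₀^{1−β})e^{−(((1−β)(δ+π)+δθ)/β)t}+z₀^{1−β}]^{1/(1−β)}. Let c₀, k₀, h₀, μ₀ > 0 satisfy c₀/k₀ = (ρ+π(1−β))/β, ū·h₀^{φ} = z₀·k₀, and ū^β = γ(1−β)k₀^β h₀^{θ−β} c₀^{−β}z₀^{−β}·z₀^{β}/(δμ₀) (i.e. the static first-order condition at t = 0). Define c(t) = c₀z₀e^{g t}z(t)^{−1}, k(t) = k₀z₀e^{g t}z(t)^{−1}, u(t) = ū, h(t) = h₀e^{g_h t}, λ(t) = c₀^{−β}z₀^{−β}e^{([(ρ−δ)(1−β)−δθ]/(1−β))t}z(t)^{β}, μ(t) = μ₀·e^{([(ρ−δ)(1−β)−δθ](β−θ)/(β(1−β+θ)))t}.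 Then for all t ≥ 0: λ = c^{−β}; u^β = γ(1−β)k^β h^{θ−β}·λ/(δμ); k' = γk^β u^{1−β}h^{1−β+θ} − πk − c; h' = δ(1−u)h; λ' = −λγβu^{1−β}k^{β−1}h^{1−β+θ} + λ(ρ+π); and μ' = μ(ρ−δ) − (μθδ/(1−β))·u. -/
/-!
The variable `z` is a Richards (generalised logistic) curve, so it solves the Bernoulli equation
`z' = γ z (z̄^(1-β) - z^(1-β))`. Since `u h^φ = z k` along the path, the Cobb–Douglas term
`u^(1-β) k^(β-1) h^(1-β+θ)` equals `z^(1-β)`, and the Euler equations for `k ∝ e^(g t) / z` and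
`λ ∝ e^(-β g t) z^β` reduce to identities between the growth rates. The right side of the static
condition is constant in `t`, because `k^β λ = (k / c)^β` and `h^(θ-β) / μ` are, so it holds since
it holds at `t = 0`.
-/

open Real

/-- Richards' generalised logistic curve: it starts at `x₀` and tends to `K` when `m, b > 0`. -/
noncomputable def richardsCurve (K x₀ b m t : ℝ) : ℝ :=
  K * x₀ / ((K ^ b - x₀ ^ b) * exp (-m * t) + x₀ ^ b) ^ (1 / b)

section Richards

variable {K x₀ b m t : ℝ}

theorem richardsCurve_denom_pos (hK : 0 < K) (hx₀ : 0 < x₀) (hmt : 0 ≤ m * t) :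
    0 < (K ^ b - x₀ ^ b) * exp (-m * t) + x₀ ^ b := by
  have he : exp (-m * t) ≤ 1 := exp_le_one_iff.mpr (by linarith)
  nlinarith [rpow_pos_of_pos hK b, rpow_pos_of_pos hx₀ b, exp_pos (-m * t)]

theorem richardsCurve_pos (hK : 0 < K) (hx₀ : 0 < x₀) (hmt : 0 ≤ m * t) :
    0 < richardsCurve K x₀ b m t :=
  div_pos (mul_pos hK hx₀) (rpow_pos_of_pos (richardsCurve_denom_pos hK hx₀ hmt) _)

theorem richardsCurve_div_rpow (hK : 0 < K) (hx₀ : 0 < x₀) (hb : b ≠ 0)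
    (hD : 0 < (K ^ b - x₀ ^ b) * exp (-m * t) + x₀ ^ b) :
    (richardsCurve K x₀ b m t / K) ^ b
      = x₀ ^ b / ((K ^ b - x₀ ^ b) * exp (-m * t) + x₀ ^ b) := by
  have hx : richardsCurve K x₀ b m t / K
      = x₀ / ((K ^ b - x₀ ^ b) * exp (-m * t) + x₀ ^ b) ^ (1 / b) := by
    rw [richardsCurve]; field_simp
  rw [hx, div_rpow hx₀.le (rpow_pos_of_pos hD _).le, ← rpow_mul hD.le, one_div_mul_cancel hb,
    rpow_one]

theorem hasDerivAt_richardsCurve (hK : 0 < K) (hx₀ : 0 < x₀) (hb : b ≠ 0)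
    (hD : 0 < (K ^ b - x₀ ^ b) * exp (-m * t) + x₀ ^ b) :
    HasDerivAt (richardsCurve K x₀ b m)
      (m / b * richardsCurve K x₀ b m t * (1 - (richardsCurve K x₀ b m t / K) ^ b)) t := by
  have hden : HasDerivAt (fun s => (K ^ b - x₀ ^ b) * exp (-m * s) + x₀ ^ b)
      ((K ^ b - x₀ ^ b) * (exp (-m * t) * -m)) t := by
    simpa using (((hasDerivAt_id t).const_mul (-m)).exp.const_mul _).add_const (x₀ ^ b)
  have hpow := ((hden.rpow_const (p := 1 / b) (Or.inl hD.ne')).inv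
    (rpow_pos_of_pos hD _).ne').const_mul (K * x₀)
  refine (hpow.congr_deriv ?_).congr_of_eventuallyEq (.of_eq ?_)
  · rw [richardsCurve_div_rpow hK hx₀ hb hD, richardsCurve, rpow_sub hD, rpow_one]
    generalize exp (-m * t) = e at hD ⊢
    generalize hDe : (K ^ b - x₀ ^ b) * e + x₀ ^ b = D at hD ⊢
    have := (rpow_pos_of_pos hD (1 / b)).ne'
    field_simp
    linear_combination m * hDe
  · ext s; simp [richardsCurve, div_eq_mul_inv]

theorem hasDerivAt_richardsCurve_of_div_eq {r : ℝ} (hK : 0 < K) (hx₀ : 0 < x₀) (hb : b ≠ 0)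
    (hmt : 0 ≤ m * t) (hm : m / b = r * K ^ b) :
    HasDerivAt (richardsCurve K x₀ b m)
      (r * richardsCurve K x₀ b m t * (K ^ b - richardsCurve K x₀ b m t ^ b)) t := by
  refine (hasDerivAt_richardsCurve hK hx₀ hb (richardsCurve_denom_pos hK hx₀ hmt)).congr_deriv ?_
  rw [hm, div_rpow (richardsCurve_pos hK hx₀ hmt).le hK.le]
  field_simp [(rpow_pos_of_pos hK b).ne']

end Richards

theorem hasDerivAt_of_eq_mul_exp {f : ℝ → ℝ} {C a : ℝ} (hf : ∀ s, f s = C * exp (a * s))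
    (t : ℝ) : HasDerivAt f (a * f t) t := by
  rw [funext hf]
  simpa [mul_comm, mul_left_comm] using ((hasDerivAt_id t).const_mul a).exp.const_mul C

theorem hasDerivAt_of_eq_mul_exp_mul_rpow {z f : ℝ → ℝ} {r W b t C a p : ℝ}
    (hz : HasDerivAt z (r * z t * (W - z t ^ b)) t) (hzt : 0 < z t)
    (hf : ∀ s, f s = C * exp (a * s) * z s ^ p) :
    HasDerivAt f ((a + p * r * (W - z t ^ b)) * f t) t := by
  have he : HasDerivAt (fun s => C * exp (a * s)) (a * (C * exp (a * t))) t :=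
    hasDerivAt_of_eq_mul_exp (fun _ => rfl) t
  rw [funext hf]
  refine (he.mul (hz.rpow_const (p := p) (Or.inl hzt.ne'))).congr_deriv ?_
  rw [rpow_sub hzt, rpow_one]
  field_simp

theorem mul_exp_mul_rpow {C : ℝ} (hC : 0 ≤ C) (a t p : ℝ) :
    (C * exp (a * t)) ^ p = C ^ p * exp (a * p * t) := by
  rw [mul_rpow hC (exp_pos _).le, ← exp_mul, mul_right_comm]

theorem mul_exp_mul_mul_rpow_rpow {C x : ℝ} (hC : 0 ≤ C) (hx : 0 ≤ x) (a t q p : ℝ) :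
    (C * exp (a * t) * x ^ q) ^ p = C ^ p * exp (a * p * t) * x ^ (q * p) := by
  rw [mul_rpow (by positivity) (rpow_nonneg hx _), mul_exp_mul_rpow hC, ← rpow_mul hx]

theorem mul_rpow_mul_mul_rpow_neg {k c x : ℝ} (hk : 0 ≤ k) (hc : 0 ≤ c) (hx : 0 < x) (p : ℝ) :
    (k * x) ^ p * (c * x) ^ (-p) = k ^ p * c ^ (-p) := by
  rw [mul_rpow hk hx.le, mul_rpow hc hx.le, rpow_neg hx.le]
  field_simp [(rpow_pos_of_pos hx p).ne']

theorem rpow_mul_rpow_neg_mul_eq_rpow {u h k z φ b : ℝ} (hu : 0 ≤ u) (hh : 0 < h) (hk : 0 < k)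
    (hz : 0 ≤ z) (huh : u * h ^ φ = z * k) : u ^ b * k ^ (-b) * h ^ (φ * b) = z ^ b := by
  rw [rpow_mul hh.le, mul_right_comm, ← mul_rpow hu (rpow_pos_of_pos hh _).le, huh,
    mul_rpow hz hk.le, mul_assoc, ← rpow_add hk, add_neg_cancel, rpow_zero, mul_one]

theorem sigma_eq_beta_second_solution_general (β θ γ pi δ ρ z0 : ℝ)
    (hβ0 : 0 < β) (hβ1 : β < 1) (hθ : 0 ≤ θ) (hγ : 0 < γ) (hpi : 0 ≤ pi)
    (hδ : 0 < δ) (hz0 : 0 < z0)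
    (hρ1 : δ * (1 - β + θ) < ρ)
    (φ δs zbar ubar g gh : ℝ)
    (hφ : φ = (1 - β + θ) / (1 - β)) (hδs : δs = δ * φ)
    (hzbar : zbar = ((δs + pi) / (β * γ)) ^ (1 / (1 - β)))
    (hubar : ubar = (ρ - δ * (1 - β + θ)) * (1 - β) / (δ * β * (1 - β + θ)))
    (hg : g = (δs - ρ) / β) (hgh : gh = g / φ)
    (z : ℝ → ℝ)
    (hz : ∀ t, z t = zbar * z0 /
      ((zbar ^ (1 - β) - z0 ^ (1 - β))
        * Real.exp (-(((1 - β) * (δ + pi) + δ * θ) / β) * t)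
        + z0 ^ (1 - β)) ^ (1 / (1 - β)))
    (c0 k0 h0 μ0 : ℝ)
    (hc0 : 0 < c0) (hk0 : 0 < k0) (hh0 : 0 < h0) (hμ0 : 0 < μ0)
    (hck : c0 / k0 = (ρ + pi * (1 - β)) / β)
    (huh : ubar * h0 ^ φ = z0 * k0)
    (hfoc0 : ubar ^ β = γ * (1 - β) * k0 ^ β * h0 ^ (θ - β) * c0 ^ (-β)
      * z0 ^ (-β) * z0 ^ β / (δ * μ0))
    (c k u h lam μ : ℝ → ℝ)
    (hc : ∀ t, c t = c0 * z0 * Real.exp (g * t) * z t ^ (-(1:ℝ)))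
    (hk : ∀ t, k t = k0 * z0 * Real.exp (g * t) * z t ^ (-(1:ℝ)))
    (hu : ∀ t, u t = ubar)
    (hh : ∀ t, h t = h0 * Real.exp (gh * t))
    (hlam : ∀ t, lam t = c0 ^ (-β) * z0 ^ (-β)
      * Real.exp (((ρ - δ) * (1 - β) - δ * θ) / (1 - β) * t) * z t ^ β)
    (hμ : ∀ t, μ t = μ0
      * Real.exp (((ρ - δ) * (1 - β) - δ * θ) * (β - θ) / (β * (1 - β + θ)) * t)) :
    (∀ t ≥ (0:ℝ), lam t = c t ^ (-β)) ∧
    (∀ t ≥ (0:ℝ), u t ^ β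
      = γ * (1 - β) * k t ^ β * h t ^ (θ - β) * lam t / (δ * μ t)) ∧
    (∀ t ≥ (0:ℝ), deriv k t
      = γ * k t ^ β * u t ^ (1 - β) * h t ^ (1 - β + θ) - pi * k t - c t) ∧
    (∀ t ≥ (0:ℝ), deriv h t = δ * (1 - u t) * h t) ∧
    (∀ t ≥ (0:ℝ), deriv lam t
      = -(lam t) * γ * β * u t ^ (1 - β) * k t ^ (β - 1) * h t ^ (1 - β + θ)
        + lam t * (ρ + pi)) ∧
    (∀ t ≥ (0:ℝ), deriv μ t = μ t * (ρ - δ) - μ t * θ * δ / (1 - β) * u t) := by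
  have hb : 0 < 1 - β := by linarith
  have hW : zbar ^ (1 - β) = (δs + pi) / (β * γ) := by
    rw [hzbar, one_div, rpow_inv_rpow (by rw [hδs, hφ]; positivity) hb.ne']
  have hzbar0 : 0 < zbar := by rw [hzbar]; exact rpow_pos_of_pos (by rw [hδs, hφ]; positivity) _
  have hubar0 : 0 ≤ ubar := by
    rw [hubar]; exact div_nonneg (mul_nonneg (by linarith) hb.le) (by positivity)
  have hm : ((1 - β) * (δ + pi) + δ * θ) / β / (1 - β) = γ * zbar ^ (1 - β) := by
    rw [hW, hδs, hφ]; field_simp; ring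
  have hzR : z = richardsCurve zbar z0 (1 - β) (((1 - β) * (δ + pi) + δ * θ) / β) := funext hz
  have hzpos (t : ℝ) (ht : 0 ≤ t) : 0 < z t :=
    hzR ▸ richardsCurve_pos hzbar0 hz0 (by positivity)
  have hz' (t : ℝ) (ht : 0 ≤ t) :
      HasDerivAt z (γ * z t * (zbar ^ (1 - β) - z t ^ (1 - β))) t :=
    hzR ▸ hasDerivAt_richardsCurve_of_div_eq hzbar0 hz0 hb.ne' (by positivity) hm
  have hkpos (t : ℝ) (ht : 0 ≤ t) : 0 < k t := by rw [hk]; have := hzpos t ht; positivity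
  have hzk (t : ℝ) (ht : 0 ≤ t) : u t * h t ^ φ = z t * k t := by
    rw [hu, hh, hk, mul_exp_mul_rpow hh0.le, ← mul_assoc, huh, hgh,
      div_mul_cancel₀ _ (by rw [hφ]; positivity), rpow_neg_one]
    field_simp [(hzpos t ht).ne']
  have hy (t : ℝ) (ht : 0 ≤ t) :
      u t ^ (1 - β) * k t ^ (β - 1) * h t ^ (1 - β + θ) = z t ^ (1 - β) := by
    rw [show β - 1 = -(1 - β) by ring, show 1 - β + θ = φ * (1 - β) by rw [hφ]; field_simp]
    exact rpow_mul_rpow_neg_mul_eq_rpow (hu t ▸ hubar0) (by rw [hh]; positivity) (hkpos t ht)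
      (hzpos t ht).le (hzk t ht)
  have hlamc (t : ℝ) (ht : 0 ≤ t) : lam t = c t ^ (-β) := by
    have hα : ((ρ - δ) * (1 - β) - δ * θ) / (1 - β) = g * -β := by
      rw [hg, hδs, hφ]; field_simp; ring
    rw [hlam, hc, mul_exp_mul_mul_rpow_rpow (by positivity) (hzpos t ht).le,
      mul_rpow hc0.le hz0.le, hα, neg_one_mul, neg_neg]
  refine ⟨hlamc, fun t ht => ?_, fun t ht => ?_, fun t ht => ?_, fun t ht => ?_, fun t ht => ?_⟩
  · have hkl : k t ^ β * lam t = k0 ^ β * c0 ^ (-β) := by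
      rw [hlamc t ht, hk, hc]; simp only [mul_assoc]
      exact mul_rpow_mul_mul_rpow_neg hk0.le hc0.le (by have := hzpos t ht; positivity) β
    have hμ' : μ t = μ0 * exp (gh * (θ - β) * t) := by
      rw [hμ, hgh, hg, hδs, hφ]; congr 3; field_simp; ring
    rw [hu, hfoc0, hh, mul_exp_mul_rpow hh0.le, hμ', rpow_neg hz0.le]
    field_simp
    exact hkl.symm
  · have hout : k t ^ β * u t ^ (1 - β) * h t ^ (1 - β + θ) = z t ^ (1 - β) * k t := by
      rw [← hy t ht, rpow_sub_one (hkpos t ht).ne']; field_simp [(hkpos t ht).ne']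
    have hck' : c t = (γ * zbar ^ (1 - β) - pi - g) * k t := by
      rw [show γ * zbar ^ (1 - β) - pi - g = c0 / k0 by rw [hck, hW, hg]; field_simp; ring, hc, hk]
      field_simp
    rw [(hasDerivAt_of_eq_mul_exp_mul_rpow (hz' t ht) (hzpos t ht) hk).deriv, hck']
    linear_combination -γ * hout
  · rw [(hasDerivAt_of_eq_mul_exp hh t).deriv, hu, hgh, hg, hδs, hφ, hubar]
    field_simp
    ring
  · have hr : ((ρ - δ) * (1 - β) - δ * θ) / (1 - β) = ρ + pi - β * γ * zbar ^ (1 - β) := by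
      rw [hW, hδs, hφ]; field_simp; ring
    rw [(hasDerivAt_of_eq_mul_exp_mul_rpow (hz' t ht) (hzpos t ht) hlam).deriv, hr]
    linear_combination (lam t * γ * β) * hy t ht
  · rw [(hasDerivAt_of_eq_mul_exp hμ t).deriv, hu, hubar]
    field_simp
    ring

/-- The second closed-form solution of the Lucas-Uzawa model with externalities
in the case σ = β, involving the transitional-dynamics variable z, satisfies all
first-order conditions of the original model. -/
theorem sigma_eq_beta_second_solution (β θ γ pi δ ρ z0 : ℝ)
    (hβ0 : 0 < β) (hβ1 : β < 1) (hθ : 0 ≤ θ) (hγ : 0 < γ) (hpi : 0 ≤ pi)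
    (hδ : 0 < δ) (hρ : 0 < ρ) (hz0 : 0 < z0)
    (hρ1 : δ * (1 - β + θ) < ρ) (hρ2 : ρ < δ * (1 - β + θ) / (1 - β))
    (φ δs zbar ubar g gh : ℝ)
    (hφ : φ = (1 - β + θ) / (1 - β)) (hδs : δs = δ * φ)
    (hzbar : zbar = ((δs + pi) / (β * γ)) ^ (1 / (1 - β)))
    (hubar : ubar = (ρ - δ * (1 - β + θ)) * (1 - β) / (δ * β * (1 - β + θ)))
    (hg : g = (δs - ρ) / β) (hgh : gh = g / φ)
    (z : ℝ → ℝ)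
    (hz : ∀ t, z t = zbar * z0 /
      ((zbar ^ (1 - β) - z0 ^ (1 - β))
        * Real.exp (-(((1 - β) * (δ + pi) + δ * θ) / β) * t)
        + z0 ^ (1 - β)) ^ (1 / (1 - β)))
    (c0 k0 h0 μ0 : ℝ)
    (hc0 : 0 < c0) (hk0 : 0 < k0) (hh0 : 0 < h0) (hμ0 : 0 < μ0)
    (hck : c0 / k0 = (ρ + pi * (1 - β)) / β)
    (huh : ubar * h0 ^ φ = z0 * k0)
    (hfoc0 : ubar ^ β = γ * (1 - β) * k0 ^ β * h0 ^ (θ - β) * c0 ^ (-β)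
      * z0 ^ (-β) * z0 ^ β / (δ * μ0))
    (c k u h lam μ : ℝ → ℝ)
    (hc : ∀ t, c t = c0 * z0 * Real.exp (g * t) * z t ^ (-(1:ℝ)))
    (hk : ∀ t, k t = k0 * z0 * Real.exp (g * t) * z t ^ (-(1:ℝ)))
    (hu : ∀ t, u t = ubar)
    (hh : ∀ t, h t = h0 * Real.exp (gh * t))
    (hlam : ∀ t, lam t = c0 ^ (-β) * z0 ^ (-β)
      * Real.exp (((ρ - δ) * (1 - β) - δ * θ) / (1 - β) * t) * z t ^ β)
    (hμ : ∀ t, μ t = μ0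
      * Real.exp (((ρ - δ) * (1 - β) - δ * θ) * (β - θ) / (β * (1 - β + θ)) * t)) :
    (∀ t ≥ (0:ℝ), lam t = c t ^ (-β)) ∧
    (∀ t ≥ (0:ℝ), u t ^ β
      = γ * (1 - β) * k t ^ β * h t ^ (θ - β) * lam t / (δ * μ t)) ∧
    (∀ t ≥ (0:ℝ), deriv k t
      = γ * k t ^ β * u t ^ (1 - β) * h t ^ (1 - β + θ) - pi * k t - c t) ∧
    (∀ t ≥ (0:ℝ), deriv h t = δ * (1 - u t) * h t) ∧
    (∀ t ≥ (0:ℝ), deriv lam t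
      = -(lam t) * γ * β * u t ^ (1 - β) * k t ^ (β - 1) * h t ^ (1 - β + θ)
        + lam t * (ρ + pi)) ∧
    (∀ t ≥ (0:ℝ), deriv μ t = μ t * (ρ - δ) - μ t * θ * δ / (1 - β) * u t) :=
  sigma_eq_beta_second_solution_general β θ γ pi δ ρ z0 hβ0 hβ1 hθ hγ hpi hδ hz0 hρ1 φ δs zbar ubar
    g gh hφ hδs hzbar hubar hg hgh z hz c0 k0 h0 μ0 hc0 hk0 hh0 hμ0 hck huh hfoc0 c k u h lam μ hc
    hk hu hh hlam hμ
end

section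
/- Let 0 < β < 1, θ ≥ 0, σ > 0, γ > 0, π ≥ 0, δ > 0, ρ > 0, and set φ := (1−β+θ)/(1−β) and δ* := δφ. Suppose c, k, h*, u, λ, μ* : ℝ → ℝ are differentiable and strictly positive and satisfy for all t: (T1) λ = c^{−σ}; (T2) (h*·u/k)^β = (γ(1−β)/δ*)·(λ/μ*); (T3) k' = γ·k^β·(u·h*)^{1−β} − πk − c; (T4) (h*)' = δ*(1−u)h*; (T5) λ' = −λ·βγ·(h*·u/k)^{1−β} + λ(ρ+π); (T6) (μ*)' = μ*(ρ−δ*). Define h(t) := h*(t)^{1/φ} and μ(t) := φ·μ*(t)·h(t)^{φ−1}. Then for all t: u^β = γ(1−β)k^β h^{θ−β}·λ/(δμ); k' = γk^β u^{1−β}h^{1−β+θ} − πk − c; h' = δ(1−u)h; λ' = −λγβu^{1−β}k^{β−1}h^{1−β+θ} + λ(ρ+π); and μ' = μ(ρ−δ) − (μθδ/(1−β))·u. -/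
/-!
Since `h* = h ^ φ`, every power of `h*` is a power of `h`, and the exponent bookkeeping rests on
the two identities `φ (1 - β) = 1 - β + θ` and `(φ - 1)(1 - β) = θ`. For the dynamics, a positive
function with growth rate `a` has `p`-th power with growth rate `p a`, and growth rates add under
products: so `h` grows at rate `δ (1 - u)`, and `μ = φ μ* h ^ (φ - 1)` at rate
`(ρ - δ φ) + (φ - 1) δ (1 - u) = ρ - δ - θ δ u / (1 - β)`.
-/

open Real

namespace LucasUzawa

theorem hasDerivAt_rpow_of_hasDerivAt_mul {f : ℝ → ℝ} {a t : ℝ} (p : ℝ)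
    (hf : HasDerivAt f (a * f t) t) (hpos : 0 < f t) :
    HasDerivAt (fun x => f x ^ p) (p * a * f t ^ p) t := by
  convert hf.rpow_const (p := p) (Or.inl hpos.ne') using 1
  rw [rpow_sub hpos, rpow_one]
  field_simp

theorem hasDerivAt_const_mul_mul_rpow {f g : ℝ → ℝ} {a b t : ℝ} (c p : ℝ)
    (hf : HasDerivAt f (a * f t) t) (hg : HasDerivAt g (b * g t) t) (hg0 : 0 < g t) :
    HasDerivAt (fun x => c * f x * g x ^ p) ((a + p * b) * (c * f t * g t ^ p)) t :=
  ((hf.const_mul c).mul (hasDerivAt_rpow_of_hasDerivAt_mul p hg hg0)).congr_deriv (by ring)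

section Exponents

variable {β θ φ : ℝ}

theorem phi_mul_one_sub (hβ : β < 1) (hφ : φ = (1 - β + θ) / (1 - β)) :
    φ * (1 - β) = 1 - β + θ := by
  rw [hφ]
  field_simp [(sub_pos.2 hβ).ne']

theorem phi_sub_one_mul_one_sub (hβ : β < 1) (hφ : φ = (1 - β + θ) / (1 - β)) :
    (φ - 1) * (1 - β) = θ := by
  linear_combination phi_mul_one_sub hβ hφ

theorem phi_pos (hβ : β < 1) (hθ : 0 ≤ θ) (hφ : φ = (1 - β + θ) / (1 - β)) : 0 < φ := by
  rw [hφ]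
  apply div_pos <;> linarith

end Exponents

theorem static_condition {β θ φ γ δ h u k lam mus : ℝ} (hφ : φ * (1 - β) = 1 - β + θ)
    (hδ : δ ≠ 0) (hφ0 : φ ≠ 0) (hh : 0 < h) (hu : 0 ≤ u) (hk : 0 < k) (hmus : mus ≠ 0)
    (T2 : (h ^ φ * u / k) ^ β = γ * (1 - β) / (δ * φ) * (lam / mus)) :
    u ^ β = γ * (1 - β) * k ^ β * h ^ (θ - β) * lam / (δ * (φ * mus * h ^ (φ - 1))) := by
  have hexp : h ^ (θ - β) = h ^ (φ - 1) / (h ^ φ) ^ β := by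
    rw [← rpow_mul hh.le, ← rpow_sub hh]
    congr 1
    linear_combination -hφ
  rw [div_rpow (by positivity) hk.le, mul_rpow (by positivity) hu] at T2
  rw [hexp]
  field_simp at T2 ⊢
  linear_combination T2

end LucasUzawa

open LucasUzawa

theorem transformed_to_original_general (β θ γ pi δ ρ : ℝ)
    (hβ1 : β < 1) (hθ : 0 ≤ θ) (hδ : 0 < δ)
    (φ δs : ℝ) (hφ : φ = (1 - β + θ) / (1 - β)) (hδs : δs = δ * φ)
    (c k hs u lam mus : ℝ → ℝ)
    (hhd : Differentiable ℝ hs) (hmd : Differentiable ℝ mus)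
    (hkpos : ∀ t, 0 < k t) (hhpos : ∀ t, 0 < hs t)
    (hupos : ∀ t, 0 < u t) (hmpos : ∀ t, 0 < mus t)
    (T2 : ∀ t, (hs t * u t / k t) ^ β = γ * (1 - β) / δs * (lam t / mus t))
    (T3 : ∀ t, deriv k t = γ * k t ^ β * (u t * hs t) ^ (1 - β) - pi * k t - c t)
    (T4 : ∀ t, deriv hs t = δs * (1 - u t) * hs t)
    (T5 : ∀ t, deriv lam t
      = -(lam t) * (β * γ) * (hs t * u t / k t) ^ (1 - β) + lam t * (ρ + pi))
    (T6 : ∀ t, deriv mus t = mus t * (ρ - δs))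
    (h μ : ℝ → ℝ)
    (hh : ∀ t, h t = hs t ^ (1 / φ))
    (hμ : ∀ t, μ t = φ * mus t * h t ^ (φ - 1)) :
    (∀ t, u t ^ β = γ * (1 - β) * k t ^ β * h t ^ (θ - β) * lam t / (δ * μ t)) ∧
    (∀ t, deriv k t
      = γ * k t ^ β * u t ^ (1 - β) * h t ^ (1 - β + θ) - pi * k t - c t) ∧
    (∀ t, deriv h t = δ * (1 - u t) * h t) ∧
    (∀ t, deriv lam t
      = -(lam t) * γ * β * u t ^ (1 - β) * k t ^ (β - 1) * h t ^ (1 - β + θ)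
        + lam t * (ρ + pi)) ∧
    (∀ t, deriv μ t = μ t * (ρ - δ) - μ t * θ * δ / (1 - β) * u t) := by
  subst hδs
  have hφ1 := phi_mul_one_sub hβ1 hφ
  have hφθ := phi_sub_one_mul_one_sub hβ1 hφ
  have hφpos := phi_pos hβ1 hθ hφ
  have hpos : ∀ t, 0 < h t := fun t => by rw [hh]; exact rpow_pos_of_pos (hhpos t) _
  have hsh : ∀ t, hs t = h t ^ φ := fun t => by
    rw [hh, one_div, rpow_inv_rpow (hhpos t).le hφpos.ne']
  have hhD : ∀ t, HasDerivAt h (δ * (1 - u t) * h t) t := fun t => by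
    rw [funext hh]
    convert hasDerivAt_rpow_of_hasDerivAt_mul (1 / φ) (T4 t ▸ (hhd t).hasDerivAt) (hhpos t)
      using 1
    field_simp
  have hμD : ∀ t, HasDerivAt μ (μ t * (ρ - δ) - μ t * θ * δ / (1 - β) * u t) t := fun t => by
    have hmusD : HasDerivAt mus ((ρ - δ * φ) * mus t) t :=
      mul_comm (mus t) _ ▸ T6 t ▸ (hmd t).hasDerivAt
    rw [funext hμ]
    refine (hasDerivAt_const_mul_mul_rpow φ (φ - 1) hmusD (hhD t) (hpos t)).congr_deriv ?_
    rw [← hφθ]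
    field_simp [(sub_pos.2 hβ1).ne']
    ring
  refine ⟨fun t => ?_, fun t => ?_, fun t => (hhD t).deriv, fun t => ?_, fun t => (hμD t).deriv⟩
  · rw [hμ]
    exact static_condition hφ1 hδ.ne' hφpos.ne' (hpos t) (hupos t).le (hkpos t) (hmpos t).ne'
      (hsh t ▸ T2 t)
  · rw [T3 t, mul_rpow (hupos t).le (hhpos t).le, hsh, ← rpow_mul (hpos t).le, hφ1]
    ring
  · rw [T5 t, div_rpow (mul_pos (hhpos t) (hupos t)).le (hkpos t).le,
      mul_rpow (hhpos t).le (hupos t).le, hsh, ← rpow_mul (hpos t).le, hφ1,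
      show β - 1 = -(1 - β) by ring, rpow_neg (hkpos t).le]
    field_simp

/-- Any solution of the transformed Lucas-Uzawa model (first-order conditions
(T1)-(T6)) yields, via h = (h*)^{1/φ} and μ = φ·μ*·h^{φ-1}, a solution of the
first-order conditions of the original Lucas-Uzawa model with externalities. -/
theorem transformed_to_original (β θ σ γ pi δ ρ : ℝ)
    (hβ0 : 0 < β) (hβ1 : β < 1) (hθ : 0 ≤ θ) (hσ : 0 < σ) (hγ : 0 < γ)
    (hpi : 0 ≤ pi) (hδ : 0 < δ) (hρ : 0 < ρ)
    (φ δs : ℝ) (hφ : φ = (1 - β + θ) / (1 - β)) (hδs : δs = δ * φ)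
    (c k hs u lam mus : ℝ → ℝ)
    (hcd : Differentiable ℝ c) (hkd : Differentiable ℝ k)
    (hhd : Differentiable ℝ hs) (hud : Differentiable ℝ u)
    (hld : Differentiable ℝ lam) (hmd : Differentiable ℝ mus)
    (hcpos : ∀ t, 0 < c t) (hkpos : ∀ t, 0 < k t) (hhpos : ∀ t, 0 < hs t)
    (hupos : ∀ t, 0 < u t) (hlpos : ∀ t, 0 < lam t) (hmpos : ∀ t, 0 < mus t)
    (T1 : ∀ t, lam t = c t ^ (-σ))
    (T2 : ∀ t, (hs t * u t / k t) ^ β = γ * (1 - β) / δs * (lam t / mus t))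
    (T3 : ∀ t, deriv k t = γ * k t ^ β * (u t * hs t) ^ (1 - β) - pi * k t - c t)
    (T4 : ∀ t, deriv hs t = δs * (1 - u t) * hs t)
    (T5 : ∀ t, deriv lam t
      = -(lam t) * (β * γ) * (hs t * u t / k t) ^ (1 - β) + lam t * (ρ + pi))
    (T6 : ∀ t, deriv mus t = mus t * (ρ - δs))
    (h μ : ℝ → ℝ)
    (hh : ∀ t, h t = hs t ^ (1 / φ))
    (hμ : ∀ t, μ t = φ * mus t * h t ^ (φ - 1)) :
    (∀ t, u t ^ β = γ * (1 - β) * k t ^ β * h t ^ (θ - β) * lam t / (δ * μ t)) ∧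
    (∀ t, deriv k t
      = γ * k t ^ β * u t ^ (1 - β) * h t ^ (1 - β + θ) - pi * k t - c t) ∧
    (∀ t, deriv h t = δ * (1 - u t) * h t) ∧
    (∀ t, deriv lam t
      = -(lam t) * γ * β * u t ^ (1 - β) * k t ^ (β - 1) * h t ^ (1 - β + θ)
        + lam t * (ρ + pi)) ∧
    (∀ t, deriv μ t = μ t * (ρ - δ) - μ t * θ * δ / (1 - β) * u t) :=
  transformed_to_original_general β θ γ pi δ ρ hβ1 hθ hδ φ δs hφ hδs c k hs u lam mus hhd hmd hkpos
    hhpos hupos hmpos T2 T3 T4 T5 T6 h μ hh hμ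
end
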